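/- Given infinitely many pairwise almost disjoint infinite subsets d_n ⊆ ω (n ∈ ω) and a set X ⊆ ω, there exists an infinite set x ⊆ ω such that for all n: x ∩ d_n is finite iff n ∈ X. (ZFC construction underlying almost disjoint coding for countably many codes.) -/
import Mathlib


/-- Given infinitely many pairwise almost disjoint infinite subsets `d n ⊆ ω`
and a set `X ⊆ ω`, there is an infinite `x ⊆ ω` such that for all `n`,
`x ∩ d n` is finite iff `n ∈ X`. -/
theorem almost_disjoint_coding_countable
    (d : ℕ → Set ℕ)
    (hinf : ∀ n, (d n).Infinite)
    (had : ∀ m n, m ≠ n → (d m ∩ d n).Finite)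
    (X : Set ℕ) :
    ∃ x : Set ℕ, x.Infinite ∧ ∀ n, ((x ∩ d n).Finite ↔ n ∈ X) := by
  classical
  -- selector function: for n ∉ X, g hits n infinitely often; for n ∈ X, finitely often
  set g : ℕ → ℕ := fun k => if (Nat.unpair k).1 ∈ X then k else (Nat.unpair k).1 with hg
  have hg_pair : ∀ i ∉ X, ∀ j, g (Nat.pair i j) = i := by
    intro i hi j
    simp only [hg, Nat.unpair_pair, if_neg hi]
  have hg_mem : ∀ i ∈ X, ∀ k, g k = i → k = i := by
    intro i hi k hk
    by_cases h : (Nat.unpair k).1 ∈ X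
    · simpa [hg, if_pos h] using hk
    · exfalso; apply h; rw [show (Nat.unpair k).1 = i from by simpa [hg, if_neg h] using hk]
      exact hi
  -- the sets we pick from
  set S : ℕ → Set ℕ :=
    fun k => d (g k) \ ⋃ i ∈ (Finset.range (k+1)).erase (g k), d i with hSdef
  have hS : ∀ k, (S k).Infinite := by
    intro k
    have hfin : (d (g k) ∩ ⋃ i ∈ (Finset.range (k+1)).erase (g k), d i).Finite := by
      have hsub : d (g k) ∩ (⋃ i ∈ (Finset.range (k+1)).erase (g k), d i) ⊆
          ⋃ i ∈ (Finset.range (k+1)).erase (g k), (d (g k) ∩ d i) := by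
        rintro y ⟨hy1, hy2⟩
        simp only [Set.mem_iUnion] at hy2 ⊢
        obtain ⟨i, hi, hyi⟩ := hy2
        exact ⟨i, hi, hy1, hyi⟩
      refine Set.Finite.subset (Set.Finite.biUnion ((Finset.range (k+1)).erase (g k)).finite_toSet
        (fun i hi => ?_)) hsub
      exact had (g k) i (fun h => (Finset.mem_erase.mp hi).1 h.symm)
    have : (d (g k) \ (d (g k) ∩ ⋃ i ∈ (Finset.range (k+1)).erase (g k), d i)).Infinite :=
      (hinf (g k)).diff hfin
    simpa [hSdef, Set.diff_self_inter] using this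
  have key : ∀ k b, ∃ m ∈ S k, b < m := fun k b => (hS k).exists_gt b
  choose F hF1 hF2 using key
  set a : ℕ → ℕ := fun k => Nat.rec (F 0 0) (fun n ih => F (n+1) ih) k with ha
  have haS : ∀ k, a k ∈ S k := by
    intro k
    cases k with
    | zero => exact hF1 0 0
    | succ n => exact hF1 (n+1) (a n)
  have hmono : StrictMono a := by
    apply strictMono_nat_of_lt_succ
    intro n
    exact hF2 (n+1) (a n)
  refine ⟨Set.range a, Set.infinite_range_of_injective hmono.injective, fun i => ?_⟩
  constructor
  · -- finite intersection ⇒ i ∈ X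
    intro hfin
    by_contra hiX
    have hinfI : (Set.range a ∩ d i).Infinite := by
      have hsetinf : {k : ℕ | g k = i}.Infinite := by
        apply Set.infinite_of_injective_forall_mem (f := fun j => Nat.pair i j)
        · intro j₁ j₂ h
          have := congrArg (fun m => (Nat.unpair m).2) h
          simpa using this
        · intro j
          exact hg_pair i hiX j
      have himg : a '' {k : ℕ | g k = i} ⊆ Set.range a ∩ d i := by
        rintro y ⟨k, hk, rfl⟩
        refine ⟨⟨k, rfl⟩, ?_⟩
        have := (haS k).1
        rwa [hk] at this
      exact Set.Infinite.mono himg (hsetinf.image (hmono.injective.injOn))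
    exact hinfI hfin
  · -- i ∈ X ⇒ finite intersection
    intro hiX
    have hsub : Set.range a ∩ d i ⊆ a '' Set.Iic i := by
      rintro y ⟨⟨k, rfl⟩, hyd⟩
      refine ⟨k, ?_, rfl⟩
      by_contra hki
      simp only [Set.mem_Iic, not_le] at hki
      by_cases hgi : g k = i
      · exact absurd (hg_mem i hiX k hgi) (by omega)
      · have : a k ∈ ⋃ j ∈ (Finset.range (k+1)).erase (g k), d j := by
          simp only [Set.mem_iUnion]
          exact ⟨i, Finset.mem_erase.mpr ⟨fun h => hgi h.symm, Finset.mem_range.mpr (by omega)⟩, hyd⟩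
        exact (haS k).2 this
    exact Set.Finite.subset ((Set.finite_Iic i).image a) hsub
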